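/- Let p(X) ∈ F[X] be any polynomial. Then Σ_{x ∈ H} p(x) = 0 if and only if there exist polynomials g(X), h(X) ∈ F[X] with deg g(X) < n − 1 such that p(X) = X·g(X) + h(X)·(X^n − 1). -/

import Mathlib

/-!
Reduce `p` modulo `X ^ n - 1`, which vanishes on `H`, to a remainder `r` of degree `< n`.
For `0 < k < n` the sum of `x ^ k` over `H` is a geometric sum of the nontrivial root of unity
`g ^ k`, hence zero, so `∑_{x ∈ H} r(x) = n · r(0)`. As `n ≠ 0` in `F`, the sum vanishes iff
`r(0) = 0`, i.e. iff `r = X · q` with `deg q < n - 1`.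
-/

open Polynomial Finset

namespace Polynomial

variable {R : Type*}

theorem degree_X_mul_lt_iff [Semiring R] [Nontrivial R] {n : ℕ} (hn : n ≠ 0) (q : R[X]) :
    (X * q).degree < (n : WithBot ℕ) ↔ q.degree < (n - 1 : ℕ) := by
  obtain ⟨m, rfl⟩ := Nat.exists_eq_succ_of_ne_zero hn
  rw [X_mul, degree_mul_X, Nat.succ_sub_one, Nat.cast_succ]
  exact WithBot.add_lt_add_iff_right WithBot.one_ne_bot

theorem X_mul_divX_of_coeff_zero_eq_zero [Semiring R] {p : R[X]} (hp : p.coeff 0 = 0) :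
    X * p.divX = p := by
  simpa [hp] using X_mul_divX_add p

theorem exists_degree_lt_eq_add_mul_X_pow_sub_one [CommRing R] [Nontrivial R] (p : R[X])
    {n : ℕ} (hn : n ≠ 0) : ∃ r h : R[X], r.degree < n ∧ p = r + h * (X ^ n - 1) := by
  have hr := degree_modByMonic_lt p (monic_X_pow_sub_C (1 : R) hn)
  rw [degree_X_pow_sub_C (Nat.pos_of_ne_zero hn), C_1] at hr
  exact ⟨p %ₘ (X ^ n - 1), p /ₘ (X ^ n - 1), hr, by rw [mul_comm, modByMonic_add_div]⟩

end Polynomial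

namespace IsPrimitiveRoot

variable {R : Type*} [CommRing R] {g : R} {n : ℕ}

theorem geom_sum_pow_eq_zero [IsDomain R] (hg : IsPrimitiveRoot g n) {k : ℕ} (hk0 : k ≠ 0)
    (hkn : k < n) : ∑ i ∈ range n, (g ^ k) ^ i = 0 := by
  refine eq_zero_of_ne_zero_of_mul_left_eq_zero
    (sub_ne_zero_of_ne (hg.pow_ne_one_of_pos_of_lt hk0 hkn)) ?_
  rw [mul_geom_sum, pow_right_comm, hg.pow_eq_one, one_pow, sub_self]

theorem sum_eval_pow_of_degree_lt [IsDomain R] (hg : IsPrimitiveRoot g n) {p : R[X]}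
    (hp : p.degree < n) : ∑ i ∈ range n, p.eval (g ^ i) = n * p.coeff 0 := by
  rcases eq_or_ne p 0 with rfl | hp0
  · simp
  have hpn : p.natDegree < n := (natDegree_lt_iff_degree_lt hp0).2 hp
  calc ∑ i ∈ range n, p.eval (g ^ i)
      = ∑ k ∈ range n, p.coeff k * ∑ i ∈ range n, (g ^ k) ^ i := by
        simp only [eval_eq_sum_range' hpn, mul_sum]
        rw [sum_comm]
        exact sum_congr rfl fun k _ => sum_congr rfl fun i _ => by rw [pow_right_comm]
    _ = n * p.coeff 0 := by
        rw [sum_eq_single_of_mem 0 (mem_range.2 ((Nat.zero_le _).trans_lt hpn))]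
        · simp [mul_comm]
        · intro k hk hk0
          rw [hg.geom_sum_pow_eq_zero hk0 (mem_range.1 hk), mul_zero]

theorem sum_eval_add_mul_X_pow_sub_one (hg : IsPrimitiveRoot g n) (r h : R[X]) :
    ∑ i ∈ range n, (r + h * (X ^ n - 1)).eval (g ^ i) = ∑ i ∈ range n, r.eval (g ^ i) := by
  refine sum_congr rfl fun i _ => ?_
  rw [eval_add, eval_mul, eval_sub, eval_pow, eval_X, eval_one, pow_right_comm, hg.pow_eq_one,
    one_pow, sub_self, mul_zero, add_zero]

end IsPrimitiveRoot

theorem sumcheck_reduced_form_general {F : Type*} [Field F] (n : ℕ)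
    (hn : (n : F) ≠ 0) (g : F) (hg : IsPrimitiveRoot g n) (p : F[X]) :
    (∑ i ∈ Finset.range n, p.eval (g ^ i)) = 0 ↔
      ∃ q h : F[X], q.degree < (n - 1 : ℕ) ∧ p = X * q + h * (X ^ n - 1) := by
  have hn0 : n ≠ 0 := by rintro rfl; exact hn Nat.cast_zero
  constructor
  · intro hsum
    obtain ⟨r, h, hr, rfl⟩ := exists_degree_lt_eq_add_mul_X_pow_sub_one p hn0
    rw [hg.sum_eval_add_mul_X_pow_sub_one, hg.sum_eval_pow_of_degree_lt hr,
      mul_eq_zero, or_iff_right hn] at hsum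
    refine ⟨r.divX, h, ?_, by rw [X_mul_divX_of_coeff_zero_eq_zero hsum]⟩
    rwa [← degree_X_mul_lt_iff hn0, X_mul_divX_of_coeff_zero_eq_zero hsum]
  · rintro ⟨q, h, hq, rfl⟩
    rw [hg.sum_eval_add_mul_X_pow_sub_one,
      hg.sum_eval_pow_of_degree_lt ((degree_X_mul_lt_iff hn0 q).2 hq)]
    simp

/-- **Aurora/Marlin sumcheck characterization.**
For any polynomial `p`, `∑_{x ∈ H} p(x) = 0` iff there exist polynomials `q, h` with
`deg q < n - 1` and `p(X) = X·q(X) + h(X)·(X^n - 1)`. Here `H = {g^0, …, g^(n-1)}` for a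
primitive `n`-th root of unity `g` in a field `F` in which `n` is nonzero. -/
theorem sumcheck_reduced_form {F : Type*} [Field F] (n : ℕ) (hn0 : 0 < n)
    (hn : (n : F) ≠ 0) (g : F) (hg : IsPrimitiveRoot g n) (p : F[X]) :
    (∑ i ∈ Finset.range n, p.eval (g ^ i)) = 0 ↔
      ∃ q h : F[X], q.degree < (n - 1 : ℕ) ∧ p = X * q + h * (X ^ n - 1) :=
  sumcheck_reduced_form_general n hn g hg p
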